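/- arXiv:2106.06231 — 2 statements merged into one kernel-verified Lean document; each statement's English description precedes it below -/
import Mathlib

section
/- Let h > 0 and β_i(x) = max(0, 1 − |x − i·h|/h) for i ∈ ℤ. Let Φ : ℤ → ℝ be an arbitrary family of arrival points and M : ℤ → ℝ a summable family with M_j ≥ 0 for all j. Define M'_i = ∑_{j ∈ ℤ} β_i(Φ_j)·M_j for each i ∈ ℤ. Then each of these series converges, the family (M'_i)_{i ∈ ℤ} is summable, and ∑_{i ∈ ℤ} M'_i = ∑_{j ∈ ℤ} M_j. In other words, the semi-Lagrangian mass-transport update conserves total mass. -/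
/-- The hat functions form a partition of unity. -/
lemma hat_partition_of_unity (h : ℝ) (hh : 0 < h)
    (β : ℤ → ℝ → ℝ)
    (hβ : ∀ (i : ℤ) (x : ℝ), β i x = max 0 (1 - |x - (i : ℝ) * h| / h))
    (y : ℝ) : HasSum (fun i : ℤ => β i y) 1 := by
  set k : ℤ := ⌊y / h⌋ with hk
  have ht0 : (k : ℝ) ≤ y / h := Int.floor_le _
  have ht1 : y / h < (k : ℝ) + 1 := Int.lt_floor_add_one _
  have hkey : ∀ i : ℤ, i ∉ ({k, k + 1} : Finset ℤ) → β i y = 0 := by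
    intro i hi
    simp only [Finset.mem_insert, Finset.mem_singleton] at hi
    push_neg at hi
    rw [hβ, max_eq_left]
    have habs : h ≤ |y - (i : ℝ) * h| := by
      rcases lt_or_ge (i : ℤ) k with hik | hik
      · have : (i : ℝ) + 1 ≤ (k : ℝ) := by exact_mod_cast hik
        have : (i : ℝ) * h + h ≤ y := by
          have := mul_le_mul_of_nonneg_right this hh.le
          rw [add_mul, one_mul] at this
          calc (i:ℝ) * h + h ≤ (k:ℝ) * h := this
            _ ≤ y := by
              have := mul_le_mul_of_nonneg_right ht0 hh.le
              rwa [div_mul_cancel₀ _ hh.ne'] at this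
        rw [abs_of_nonneg (by linarith)]; linarith
      · have hik2 : k + 2 ≤ i := by omega
        have : (k : ℝ) + 2 ≤ (i : ℝ) := by exact_mod_cast hik2
        have hy : y < ((k : ℝ) + 1) * h := by
          have := mul_lt_mul_of_pos_right ht1 hh
          rwa [div_mul_cancel₀ _ hh.ne'] at this
        have : ((k:ℝ) + 2) * h ≤ (i:ℝ) * h := mul_le_mul_of_nonneg_right this hh.le
        rw [abs_of_nonpos (by nlinarith)]; nlinarith
    have : 1 ≤ |y - (i : ℝ) * h| / h := (one_le_div hh).mpr habs
    linarith
  have hsum : HasSum (fun i : ℤ => β i y) (∑ i ∈ ({k, k+1} : Finset ℤ), β i y) :=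
    hasSum_sum_of_ne_finset_zero hkey
  have hval : (∑ i ∈ ({k, k+1} : Finset ℤ), β i y) = 1 := by
    have hne : k ≠ k + 1 := by omega
    rw [Finset.sum_pair hne, hβ, hβ]
    have hy0 : (k : ℝ) * h ≤ y := by
      have := mul_le_mul_of_nonneg_right ht0 hh.le
      rwa [div_mul_cancel₀ _ hh.ne'] at this
    have hy1 : y < ((k : ℝ) + 1) * h := by
      have := mul_lt_mul_of_pos_right ht1 hh
      rwa [div_mul_cancel₀ _ hh.ne'] at this
    have h1 : |y - (k : ℝ) * h| = y - (k : ℝ) * h := abs_of_nonneg (by linarith)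
    have h2 : |y - ((k : ℝ) + 1) * h| = ((k : ℝ) + 1) * h - y := by
      rw [abs_of_nonpos (by linarith)]; ring
    push_cast
    rw [h1, h2]
    have e1 : max 0 (1 - (y - (k:ℝ)*h)/h) = 1 - (y - (k:ℝ)*h)/h := by
      apply max_eq_right
      have : (y - (k:ℝ)*h)/h ≤ 1 := by
        rw [div_le_one hh]; nlinarith
      linarith
    have e2 : max 0 (1 - (((k:ℝ)+1)*h - y)/h) = 1 - (((k:ℝ)+1)*h - y)/h := by
      apply max_eq_right
      have : (((k:ℝ)+1)*h - y)/h ≤ 1 := by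
        rw [div_le_one hh]; nlinarith
      linarith
    rw [e1, e2]
    field_simp
    ring
  rwa [hval] at hsum

/-- The semi-Lagrangian mass-transport update `M'_i = ∑_j β_i(Φ_j) M_j` (with hat functions
`β_i(x) = max(0, 1 - |x - i h|/h)`) is well defined and conserves the total mass. -/
theorem semi_lagrangian_mass_conservation
    (h : ℝ) (hh : 0 < h)
    (β : ℤ → ℝ → ℝ)
    (hβ : ∀ (i : ℤ) (x : ℝ), β i x = max 0 (1 - |x - (i : ℝ) * h| / h))
    (Φ : ℤ → ℝ) (M : ℤ → ℝ) (hM : Summable M) (hM0 : ∀ j : ℤ, 0 ≤ M j)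
    (M' : ℤ → ℝ) (hM' : ∀ i : ℤ, M' i = ∑' j : ℤ, β i (Φ j) * M j) :
    (∀ i : ℤ, Summable fun j : ℤ => β i (Φ j) * M j) ∧
    Summable M' ∧
    ∑' i : ℤ, M' i = ∑' j : ℤ, M j := by
  have hβ0 : ∀ i x, 0 ≤ β i x := fun i x => by rw [hβ]; exact le_max_left _ _
  have hβ1 : ∀ i x, β i x ≤ 1 := fun i x => by
    rw [hβ]
    apply max_le (by norm_num)
    have : 0 ≤ |x - (i:ℝ)*h| / h := div_nonneg (abs_nonneg _) hh.le
    linarith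
  have hpart : ∀ y, HasSum (fun i : ℤ => β i y) 1 :=
    hat_partition_of_unity h hh β hβ
  have hrow : ∀ j : ℤ, HasSum (fun i : ℤ => β i (Φ j) * M j) (M j) := by
    intro j
    simpa using (hpart (Φ j)).mul_right (M j)
  have hnn : ∀ i j : ℤ, 0 ≤ β i (Φ j) * M j :=
    fun i j => mul_nonneg (hβ0 _ _) (hM0 j)
  have hcol : ∀ i : ℤ, Summable fun j : ℤ => β i (Φ j) * M j := by
    intro i
    refine hM.of_nonneg_of_le (fun j => hnn i j) (fun j => ?_)
    exact mul_le_of_le_one_left (hM0 j) (hβ1 i (Φ j))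
  -- summability on the product, order (j, i)
  have hF : Summable (fun p : ℤ × ℤ => β p.2 (Φ p.1) * M p.1) := by
    rw [summable_prod_of_nonneg (fun p => hnn p.2 p.1)]
    constructor
    · exact fun j => (hrow j).summable
    · apply hM.congr
      intro j
      exact ((hrow j).tsum_eq).symm
  have hF' : Summable (fun p : ℤ × ℤ => β p.1 (Φ p.2) * M p.2) := by
    have := hF.prod_symm
    simpa [Prod.swap] using this
  have hsumM' : Summable M' := by
    have := (summable_prod_of_nonneg (f := fun p : ℤ × ℤ => β p.1 (Φ p.2) * M p.2)
      (fun p => hnn p.1 p.2)).mp hF'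
    apply this.2.congr
    intro i
    rw [hM' i]
  refine ⟨hcol, hsumM', ?_⟩
  have hcomm : ∑' (i : ℤ) (j : ℤ), β i (Φ j) * M j
      = ∑' (j : ℤ) (i : ℤ), β i (Φ j) * M j :=
    (Summable.tsum_comm' (f := fun i j : ℤ => β i (Φ j) * M j) hF' hcol
      (fun j => (hrow j).summable)).symm
  calc ∑' i : ℤ, M' i = ∑' (i : ℤ) (j : ℤ), β i (Φ j) * M j := by
        exact tsum_congr hM'
    _ = ∑' (j : ℤ) (i : ℤ), β i (Φ j) * M j := hcomm
    _ = ∑' j : ℤ, M j := tsum_congr fun j => (hrow j).tsum_eq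
end

section
/- Let E be a nonempty finite set and T > 0. Let g : E × (E → ℝ) → ℝ, H : E × (E → ℝ) × (E → ℝ) → ℝ and q* : E × E × (E → ℝ) × (E → ℝ) → ℝ be given, and define h*(m, u) : E → ℝ by h*(m, u)(x') = ∑_{x ∈ E} q*(x, x', m, u)·m(x). Suppose (u, m) with u, m : [0,T] → (E → ℝ) is a continuously differentiable solution of the forward-backward system: ∂_t u(t, x) = H(x, m(t, ·), u(t, ·)) for all (t,x) ∈ [0,T] × E, ∂_t m(t, x') = ∑_{x ∈ E} m(t, x)·q*(x, x', m(t, ·), u(t, ·)) for all (t,x') ∈ [0,T] × E, with u(T, x) = g(x, m(T, ·)). Suppose 𝒰 : [0,T] × E × (E → ℝ) → ℝ is, for each x, continuously differentiable in (t, m̃) ∈ [0,T] × ℝ^E and solves the master equation: −∂_t 𝒰(t, x, m̃) + H(x, m̃, 𝒰(t, ·, m̃)) − ∑_{x' ∈ E} h*(m̃, 𝒰(t, ·, m̃))(x')·(∂𝒰/∂m̃(x'))(t, x, m̃) = 0 for all (t, x, m̃), with terminal condition 𝒰(T, x, m̃) = g(x, m̃). Assume there is a constant L such that, for all t ∈ [0,T],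 x, x' ∈ E and all w, w' : E → ℝ: |H(x, m(t,·), w) − H(x, m(t,·), w')| ≤ L·max_{y}|w(y) − w'(y)|, |q*(x, x', m(t,·), w) − q*(x, x', m(t,·), w')| ≤ L·max_{y}|w(y) − w'(y)|, |m(t, x)| ≤ L, and |(∂𝒰/∂m̃(x'))(t, x, m(t,·))| ≤ L. Then 𝒰(t, x, m(t, ·)) = u(t, x) for all (t, x) ∈ [0,T] × E. -/
/-!
Along the flow, the defect `φ t = 𝒰(t, ·, m t) - u t` vanishes at `t = T`. Differentiating it by
the chain rule and substituting the master equation and the equation for `m`, the `∂ₜ𝒰` terms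
cancel: what remains are the differences of `H` and of `h*` evaluated at `𝒰(t, ·, m t)` and at
`u t`, so the Lipschitz and boundedness assumptions give `‖φ' t‖ ≤ C ‖φ t‖`. Grönwall's
inequality, run backward from `T`, forces `φ = 0`.
-/

theorem eq_zero_of_norm_deriv_le_mul_norm_of_terminal_eq_zero
    {F : Type*} [NormedAddCommGroup F] [NormedSpace ℝ F] {f f' : ℝ → F} {K a b : ℝ}
    (hf : ∀ t ∈ Set.Icc a b, HasDerivAt f (f' t) t) (hb : f b = 0)
    (bound : ∀ t ∈ Set.Icc a b, ‖f' t‖ ≤ K * ‖f t‖) :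
    ∀ t ∈ Set.Icc a b, f t = 0 := by
  have mem_neg {s : ℝ} (hs : s ∈ Set.Icc (-b) (-a)) : -s ∈ Set.Icc a b :=
    ⟨le_neg.2 hs.2, neg_le.2 hs.1⟩
  have hrev (s : ℝ) (hs : s ∈ Set.Icc (-b) (-a)) :
      HasDerivAt (fun s => f (-s)) (-f' (-s)) s := by
    simpa [Function.comp_def] using (hf (-s) (mem_neg hs)).scomp s (hasDerivAt_neg s)
  have hzero := eq_zero_of_abs_deriv_le_mul_abs_self_of_eq_zero_right (K := K)
    (fun s hs => (hrev s hs).continuousAt.continuousWithinAt)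
    (fun s hs => (hrev s (Set.Ico_subset_Icc_self hs)).hasDerivWithinAt) (by simpa using hb)
    (fun s hs => by simpa using bound (-s) (mem_neg (Set.Ico_subset_Icc_self hs)))
  intro t ht
  simpa using hzero (-t) ⟨neg_le_neg ht.2, neg_le_neg ht.1⟩

theorem hasDerivAt_comp_prodMk
    {G W : Type*} [NormedAddCommGroup G] [NormedSpace ℝ G]
    [NormedAddCommGroup W] [NormedSpace ℝ W]
    {F : ℝ × G → W} {γ : ℝ → G} {γ' : G} {t : ℝ}
    (hF : DifferentiableAt ℝ F (t, γ t)) (hγ : HasDerivAt γ γ' t) :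
    HasDerivAt (fun τ => F (τ, γ τ))
      (deriv (fun τ => F (τ, γ t)) t + fderiv ℝ (fun y => F (t, y)) (γ t) γ') t := by
  have hFd := hF.hasFDerivAt
  have htime : HasDerivAt (fun τ => F (τ, γ t)) (fderiv ℝ F (t, γ t) (1, 0)) t :=
    hFd.comp_hasDerivAt t ((hasDerivAt_id t).prodMk (hasDerivAt_const t _))
  have hspace : HasFDerivAt (fun y => F (t, y))
      ((fderiv ℝ F (t, γ t)).comp (ContinuousLinearMap.inr ℝ ℝ G)) (γ t) :=
    hFd.comp (γ t) ((hasFDerivAt_const t _).prodMk (hasFDerivAt_id _))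
  have hsplit : ((1 : ℝ), γ') = (1, 0) + (0, γ') := by simp
  rw [htime.deriv, hspace.fderiv, ContinuousLinearMap.comp_apply, ContinuousLinearMap.inr_apply,
    ← map_add, ← hsplit]
  exact hFd.comp_hasDerivAt t ((hasDerivAt_id t).prodMk hγ)

section Defect

variable {E : Type*} [Fintype E]

/-- The time derivative of `𝒰(t, ·, m t) - u t`, with `h = H(·, m t, ·)`, `q = q*(·, ·, m t, ·)`,
`μ = m t`, `U = 𝒰(t, ·, m t)`, `w = u t` and `D x x' = ∂𝒰(t, x, m t)/∂m(x')`. -/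
def defectDeriv (h : E → (E → ℝ) → ℝ) (q : E → E → (E → ℝ) → ℝ) (μ U w : E → ℝ)
    (D : E → E → ℝ) : E → ℝ :=
  fun x => h x U - h x w + ∑ x', (∑ y, μ y * (q y x' w - q y x' U)) * D x x'

theorem abs_sum_mul_le_card_mul {a b : E → ℝ} {A B : ℝ}
    (ha : ∀ y, |a y| ≤ A) (hb : ∀ y, |b y| ≤ B) (hA : 0 ≤ A) :
    |∑ y, a y * b y| ≤ Fintype.card E * (A * B) := by
  calc |∑ y, a y * b y| ≤ ∑ y, |a y * b y| := Finset.abs_sum_le_sum_abs _ _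
    _ ≤ ∑ _y : E, A * B := Finset.sum_le_sum fun y _ => by
        rw [abs_mul]; exact mul_le_mul (ha y) (hb y) (abs_nonneg _) hA
    _ = Fintype.card E * (A * B) := by simp

theorem norm_defectDeriv_le {h : E → (E → ℝ) → ℝ} {q : E → E → (E → ℝ) → ℝ} {μ U w : E → ℝ}
    {D : E → E → ℝ} {L : ℝ} (hL : 0 ≤ L)
    (hh : ∀ x w w', |h x w - h x w'| ≤ L * ‖w - w'‖)
    (hq : ∀ x x' w w', |q x x' w - q x x' w'| ≤ L * ‖w - w'‖)
    (hμ : ∀ y, |μ y| ≤ L) (hD : ∀ x x', |D x x'| ≤ L) :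
    ‖defectDeriv h q μ U w D‖ ≤ (L + Fintype.card E ^ 2 * L ^ 3) * ‖U - w‖ := by
  have hq' (y x') : |q y x' w - q y x' U| ≤ L * ‖U - w‖ := by
    rw [← norm_neg, neg_sub]; exact hq y x' w U
  have htransport (x') :
      |∑ y, μ y * (q y x' w - q y x' U)| ≤ Fintype.card E * (L * (L * ‖U - w‖)) :=
    abs_sum_mul_le_card_mul hμ (hq' · x') hL
  refine pi_norm_le_iff_of_nonneg (by positivity) |>.2 fun x => ?_
  have hsum := abs_sum_mul_le_card_mul (fun x' => htransport x') (hD x ·) (by positivity)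
  calc ‖defectDeriv h q μ U w D x‖
      ≤ |h x U - h x w| + |∑ x', (∑ y, μ y * (q y x' w - q y x' U)) * D x x'| :=
        abs_add_le _ _
    _ ≤ L * ‖U - w‖ + Fintype.card E * (Fintype.card E * (L * (L * ‖U - w‖)) * L) :=
        add_le_add (hh x U w) hsum
    _ = (L + Fintype.card E ^ 2 * L ^ 3) * ‖U - w‖ := by ring

theorem hasDerivAt_defect [DecidableEq E]
    {H : E → (E → ℝ) → (E → ℝ) → ℝ} {qstar : E → E → (E → ℝ) → (E → ℝ) → ℝ}
    {hstar : (E → ℝ) → (E → ℝ) → E → ℝ}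
    (hhstar : ∀ (mm uu : E → ℝ) (x' : E), hstar mm uu x' = ∑ x : E, qstar x x' mm uu * mm x)
    {u m : ℝ → E → ℝ} {𝒰 : ℝ → E → (E → ℝ) → ℝ} {t : ℝ} {x : E}
    (hu : HasDerivAt (fun τ => u τ x) (H x (m t) (u t)) t)
    (hm : ∀ x', HasDerivAt (fun τ => m τ x') (∑ y, m t y * qstar y x' (m t) (u t)) t)
    (h𝒰 : DifferentiableAt ℝ (fun q : ℝ × (E → ℝ) => 𝒰 q.1 x q.2) (t, m t))
    (hmaster : -deriv (fun τ => 𝒰 τ x (m t)) t + H x (m t) (fun y => 𝒰 t y (m t))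
        - ∑ x', hstar (m t) (fun y => 𝒰 t y (m t)) x'
            * fderiv ℝ (fun μ => 𝒰 t x μ) (m t) (Pi.single x' 1) = 0) :
    HasDerivAt (fun τ => 𝒰 τ x (m τ) - u τ x)
      (defectDeriv (fun y => H y (m t)) (fun y y' => qstar y y' (m t)) (m t)
        (fun y => 𝒰 t y (m t)) (u t)
        (fun y y' => fderiv ℝ (fun μ => 𝒰 t y μ) (m t) (Pi.single y' 1)) x) t := by
  set D := fderiv ℝ (fun μ => 𝒰 t x μ) (m t)
  set mdot : E → ℝ := fun x' => ∑ y, m t y * qstar y x' (m t) (u t)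
  have hD : D mdot = ∑ x', mdot x' * D (Pi.single x' 1) := by
    conv_lhs => rw [pi_eq_sum_univ' mdot]
    simp only [map_sum, map_smul, smul_eq_mul]
  have htime : deriv (fun τ => 𝒰 τ x (m t)) t = H x (m t) (fun y => 𝒰 t y (m t))
      - ∑ x', hstar (m t) (fun y => 𝒰 t y (m t)) x' * D (Pi.single x' 1) := by
    linarith
  refine ((hasDerivAt_comp_prodMk h𝒰 (hasDerivAt_pi.2 hm)).sub hu).congr_deriv ?_
  change deriv (fun τ => 𝒰 τ x (m t)) t + D mdot - H x (m t) (u t) = _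
  rw [hD, htime]
  simp only [defectDeriv, hhstar, mdot, Finset.sum_sub_distrib, sub_mul, mul_comm (m t _)]
  ring

end Defect

theorem master_equation_characteristics_general
    {E : Type*} [Fintype E] [DecidableEq E]
    (T : ℝ)
    (g : E → (E → ℝ) → ℝ)
    (H : E → (E → ℝ) → (E → ℝ) → ℝ)
    (qstar : E → E → (E → ℝ) → (E → ℝ) → ℝ)
    (hstar : (E → ℝ) → (E → ℝ) → E → ℝ)
    (hhstar : ∀ (mm uu : E → ℝ) (x' : E), hstar mm uu x' = ∑ x : E, qstar x x' mm uu * mm x)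
    -- the forward-backward system
    (u m : ℝ → E → ℝ)
    (hu : ∀ x : E, ∀ t ∈ Set.Icc (0 : ℝ) T,
      HasDerivAt (fun τ => u τ x) (H x (m t) (u t)) t)
    (hm : ∀ x' : E, ∀ t ∈ Set.Icc (0 : ℝ) T,
      HasDerivAt (fun τ => m τ x') (∑ x : E, m t x * qstar x x' (m t) (u t)) t)
    (huT : ∀ x : E, u T x = g x (m T))
    -- the master equation
    (𝒰 : ℝ → E → (E → ℝ) → ℝ)
    (h𝒰smooth : ∀ x : E, ContDiff ℝ 1 (fun q : ℝ × (E → ℝ) => 𝒰 q.1 x q.2))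
    (hmaster : ∀ (t : ℝ) (x : E) (mt : E → ℝ),
      -deriv (fun τ => 𝒰 τ x mt) t + H x mt (fun y => 𝒰 t y mt)
        - ∑ x' : E, hstar mt (fun y => 𝒰 t y mt) x'
            * (fderiv ℝ (fun μ => 𝒰 t x μ) mt (Pi.single x' 1)) = 0)
    (h𝒰T : ∀ (x : E) (mt : E → ℝ), 𝒰 T x mt = g x mt)
    -- Lipschitz and boundedness assumptions along the flow
    (L : ℝ)
    (hHlip : ∀ t ∈ Set.Icc (0 : ℝ) T, ∀ (x : E) (w w' : E → ℝ),
      |H x (m t) w - H x (m t) w'| ≤ L * ‖w - w'‖)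
    (hqlip : ∀ t ∈ Set.Icc (0 : ℝ) T, ∀ (x x' : E) (w w' : E → ℝ),
      |qstar x x' (m t) w - qstar x x' (m t) w'| ≤ L * ‖w - w'‖)
    (hmbd : ∀ t ∈ Set.Icc (0 : ℝ) T, ∀ x : E, |m t x| ≤ L)
    (h𝒰mbd : ∀ t ∈ Set.Icc (0 : ℝ) T, ∀ x x' : E,
      |fderiv ℝ (fun μ => 𝒰 t x μ) (m t) (Pi.single x' 1)| ≤ L) :
    ∀ t ∈ Set.Icc (0 : ℝ) T, ∀ x : E, 𝒰 t x (m t) = u t x := by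
  intro t ht x
  have hL : 0 ≤ L := (abs_nonneg _).trans (hmbd t ht x)
  set defect : ℝ → E → ℝ := fun τ y => 𝒰 τ y (m τ) - u τ y
  have hderiv (τ) (hτ : τ ∈ Set.Icc 0 T) := hasDerivAt_pi.2 fun y =>
    hasDerivAt_defect hhstar (hu y τ hτ) (hm · τ hτ)
      ((h𝒰smooth y).differentiable one_ne_zero _) (hmaster τ y (m τ))
  have hbound (τ) (hτ : τ ∈ Set.Icc 0 T) := norm_defectDeriv_le (U := fun y => 𝒰 τ y (m τ))
    (w := u τ) hL (hHlip τ hτ) (hqlip τ hτ) (hmbd τ hτ) (h𝒰mbd τ hτ)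
  have hterminal : defect T = 0 := funext fun y => by simp [defect, h𝒰T, huT]
  have hzero := eq_zero_of_norm_deriv_le_mul_norm_of_terminal_eq_zero hderiv hterminal hbound
  exact sub_eq_zero.1 (congrFun (hzero t ht) x)

/-- Finite-state MFG: the solution of the forward-backward ODE system plays the role of
characteristics for the master equation.  If `(u, m)` solves the forward-backward system
and `𝒰` is a C¹ solution of the master equation (with the stated Lipschitz/boundedness
bounds along the flow), then `𝒰(t, x, m(t,·)) = u(t, x)` on `[0,T]`. -/
theorem master_equation_characteristics
    {E : Type*} [Fintype E] [Nonempty E] [DecidableEq E]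
    (T : ℝ) (hT : 0 < T)
    (g : E → (E → ℝ) → ℝ)
    (H : E → (E → ℝ) → (E → ℝ) → ℝ)
    (qstar : E → E → (E → ℝ) → (E → ℝ) → ℝ)
    (hstar : (E → ℝ) → (E → ℝ) → E → ℝ)
    (hhstar : ∀ (mm uu : E → ℝ) (x' : E), hstar mm uu x' = ∑ x : E, qstar x x' mm uu * mm x)
    -- the forward-backward system
    (u m : ℝ → E → ℝ)
    (hu : ∀ x : E, ∀ t ∈ Set.Icc (0 : ℝ) T,
      HasDerivAt (fun τ => u τ x) (H x (m t) (u t)) t)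
    (hm : ∀ x' : E, ∀ t ∈ Set.Icc (0 : ℝ) T,
      HasDerivAt (fun τ => m τ x') (∑ x : E, m t x * qstar x x' (m t) (u t)) t)
    (huT : ∀ x : E, u T x = g x (m T))
    -- the master equation
    (𝒰 : ℝ → E → (E → ℝ) → ℝ)
    (h𝒰smooth : ∀ x : E, ContDiff ℝ 1 (fun q : ℝ × (E → ℝ) => 𝒰 q.1 x q.2))
    (hmaster : ∀ (t : ℝ) (x : E) (mt : E → ℝ),
      -deriv (fun τ => 𝒰 τ x mt) t + H x mt (fun y => 𝒰 t y mt)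
        - ∑ x' : E, hstar mt (fun y => 𝒰 t y mt) x'
            * (fderiv ℝ (fun μ => 𝒰 t x μ) mt (Pi.single x' 1)) = 0)
    (h𝒰T : ∀ (x : E) (mt : E → ℝ), 𝒰 T x mt = g x mt)
    -- Lipschitz and boundedness assumptions along the flow
    (L : ℝ)
    (hHlip : ∀ t ∈ Set.Icc (0 : ℝ) T, ∀ (x : E) (w w' : E → ℝ),
      |H x (m t) w - H x (m t) w'| ≤ L * ‖w - w'‖)
    (hqlip : ∀ t ∈ Set.Icc (0 : ℝ) T, ∀ (x x' : E) (w w' : E → ℝ),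
      |qstar x x' (m t) w - qstar x x' (m t) w'| ≤ L * ‖w - w'‖)
    (hmbd : ∀ t ∈ Set.Icc (0 : ℝ) T, ∀ x : E, |m t x| ≤ L)
    (h𝒰mbd : ∀ t ∈ Set.Icc (0 : ℝ) T, ∀ x x' : E,
      |fderiv ℝ (fun μ => 𝒰 t x μ) (m t) (Pi.single x' 1)| ≤ L) :
    ∀ t ∈ Set.Icc (0 : ℝ) T, ∀ x : E, 𝒰 t x (m t) = u t x :=
  master_equation_characteristics_general T g H qstar hstar hhstar u m hu hm huT 𝒰 h𝒰smooth hmaster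
    h𝒰T L hHlip hqlip hmbd h𝒰mbd
end
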